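/- Suppose x ≥ 0 satisfies constraints (Λx)_i ≥ 1 where (Λx)_i = c_d·Σ_{j≤i} x_j + ((N−i)c_a + ε)·‖x‖₁, the f-th inequality is tight, f < N, and x_{f+2} = 0. If additionally the (f+1)-th inequality is loose, then x_{f+1} > (c_a/c_d)·‖x‖₁, and the transformation x̂ with x̂_{f+1} = (c_a/c_d)‖x‖₁, x̂_{f+2} = x_{f+1} − (c_a/c_d)‖x‖₁, other entries unchanged, preserves ‖x‖₁ and strictly decreases μᵀx whenever μ is strictly decreasing. -/
import Mathlib


theorem stmt_11 (N : ℕ) (x : ℕ → ℝ) (hx0 : ∀ j, 0 ≤ x j)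
    (c_d c_a ε : ℝ) (hcd : 0 < c_d) (hca : 0 < c_a) (hε : 0 < ε)
    (μ : ℕ → ℝ) (hμ : ∀ i, μ (i+1) < μ i)
    (F : ℕ → ℝ)
    (hF : ∀ i, F i = c_d * (∑ j ∈ Finset.range (i+1), x j) +
      (((N - i : ℕ) : ℝ) * c_a + ε) * (∑ j ∈ Finset.range (N+2), x j))
    (hfeas : ∀ i, i ≤ N → 1 ≤ F i)
    (f : ℕ) (hfN : f < N) (htight : F f = 1) (hloose : 1 < F (f+1))
    (hzero : x (f+2) = 0)
    (x' : ℕ → ℝ)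
    (hx' : x' = fun i => if i = f + 1 then (c_a / c_d) * (∑ j ∈ Finset.range (N+2), x j)
      else if i = f + 2 then x (f+1) - (c_a / c_d) * (∑ j ∈ Finset.range (N+2), x j)
      else x i) :
    (c_a / c_d) * (∑ j ∈ Finset.range (N+2), x j) < x (f+1) ∧
    (∑ j ∈ Finset.range (N+2), x' j = ∑ j ∈ Finset.range (N+2), x j) ∧
    (∑ j ∈ Finset.range (N+2), μ j * x' j < ∑ j ∈ Finset.range (N+2), μ j * x j) := by
  subst hx'
  set S := ∑ j ∈ Finset.range (N+2), x j with hS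
  set m := (c_a / c_d) * S with hm
  have hcast1 : ((N - (f+1) : ℕ) : ℝ) = (N:ℝ) - f - 1 := by
    rw [Nat.cast_sub (by omega)]; push_cast; ring
  have hcast0 : ((N - f : ℕ) : ℝ) = (N:ℝ) - f := by
    rw [Nat.cast_sub (by omega)]
  have hdiff : F (f+1) - F f = c_d * x (f+1) - c_a * S := by
    rw [hF, hF, Finset.sum_range_succ x (f+1), hcast1, hcast0]
    ring
  have hkey : c_a * S < c_d * x (f+1) := by linarith
  have h1 : m < x (f+1) := by
    rw [hm, div_mul_eq_mul_div, div_lt_iff₀ hcd]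
    linarith
  have hne : f + 1 ≠ f + 2 := by omega
  have hne' : f + 2 ≠ f + 1 := by omega
  have hd : ∀ (w : ℕ → ℝ),
      ∑ j ∈ Finset.range (N+2),
        (w j * ((if j = f+1 then m else if j = f+2 then x (f+1) - m else x j) - x j))
      = w (f+1) * (m - x (f+1)) + w (f+2) * ((x (f+1) - m) - x (f+2)) := by
    intro w
    rw [← Finset.sum_subset (s₁ := ({f+1, f+2} : Finset ℕ))
      (by intro a ha; simp only [Finset.mem_insert, Finset.mem_singleton] at ha
          rcases ha with h | h <;> simp [Finset.mem_range, h] <;> omega)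
      (by intro j hj hj2
          simp only [Finset.mem_insert, Finset.mem_singleton, not_or] at hj2
          simp [hj2.1, hj2.2])]
    rw [Finset.sum_pair hne]
    simp [hne, hne']
  have hsum : ∀ (w : ℕ → ℝ),
      ∑ j ∈ Finset.range (N+2),
        w j * (if j = f+1 then m else if j = f+2 then x (f+1) - m else x j)
      = ∑ j ∈ Finset.range (N+2), w j * x j
        + (w (f+1) * (m - x (f+1)) + w (f+2) * ((x (f+1) - m) - x (f+2))) := by
    intro w
    have := hd w
    simp only [mul_sub] at this
    rw [Finset.sum_sub_distrib] at this
    linarith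
  constructor
  · exact h1
  constructor
  · have := hsum (fun _ => 1)
    simp only [one_mul] at this
    rw [hzero] at this
    linarith [this]
  · have := hsum μ
    rw [hzero] at this
    rw [this]
    nlinarith [hμ (f+1), h1]
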